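/- For every regular expression e over α: (1) the set ρ(e) is finite; (2) ρ(e) is closed under Antimirov derivatives, i.e. if e' ∈ ρ(e), a ∈ α and e'' ∈ ∂(e', a), then e'' ∈ ρ(e); and (3) ι(e) ⊆ ρ(e). -/

import Mathlib

/-- The Antimirov derivative of a regular expression with respect to a letter. -/
def aderiv {α : Type*} : RegularExpression α → α → Set (RegularExpression α)
  | .zero, _ => ∅
  | .epsilon, _ => ∅
  | .char b, a => {f | a = b ∧ f = 1}
  | .plus e f, a => aderiv e a ∪ aderiv f a
  | .comp e f, a =>
      (fun e' => e' * f) '' aderiv e a ∪ {f' | f' ∈ aderiv f a ∧ [] ∈ e.matches'}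
  | .star e, a => (fun e' => e' * e.star) '' aderiv e a

/-- The initial states of the Antimirov automaton of a regular expression. -/
def ini {α : Type*} : RegularExpression α → Set (RegularExpression α)
  | .zero => ∅
  | .epsilon => {1}
  | .char a => {RegularExpression.char a}
  | .plus e f => ini e ∪ ini f
  | .comp e f => (fun e' => e' * f) '' ini e
  | .star e => (fun e' => e' * e.star) '' ini e ∪ {1}

/-- The states of the Antimirov automaton of a regular expression. -/
def rho {α : Type*} : RegularExpression α → Set (RegularExpression α)
  | .zero => ∅
  | .epsilon => {1}
  | .char a => {RegularExpression.char a, 1}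
  | .plus e f => rho e ∪ rho f
  | .comp e f => (fun e' => e' * f) '' rho e ∪ rho f
  | .star e => (fun e' => e' * e.star) '' rho e ∪ {1}

/-!
Everything goes by structural induction on `e`. Finiteness and `ι(e) ⊆ ρ(e)` are immediate
from the defining clauses. For closure, one first shows `∂(e, a) ⊆ ρ(e)`; this handles the
derivatives that leave the "`e' * f` with `e' ∈ ρ(e)`" part of `ρ(e * f)`: when `e'` is
nullable, `∂(e' * f, a)` contains `∂(f, a) ⊆ ρ(f)`, and for `f = e∗` this is
`∂(e, a) * e∗ ⊆ ρ(e) * e∗`.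
-/

namespace RegularExpression

variable {α : Type*}

theorem rho_finite (e : RegularExpression α) : (rho e).Finite := by
  induction e with
  | zero => simp [rho]
  | epsilon => simp [rho]
  | char b => simp [rho]
  | plus e f ihe ihf => exact ihe.union ihf
  | comp e f ihe ihf => exact (ihe.image _).union ihf
  | star e ihe => exact (ihe.image _).union (Set.finite_singleton _)

theorem ini_subset_rho (e : RegularExpression α) : ini e ⊆ rho e := by
  induction e with
  | zero => simp [ini, rho]
  | epsilon => simp [ini, rho]
  | char b => simp [ini, rho]
  | plus e f ihe ihf => exact Set.union_subset_union ihe ihf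
  | comp e f ihe ihf => exact (Set.image_mono ihe).trans Set.subset_union_left
  | star e ihe => exact Set.union_subset_union_left _ (Set.image_mono ihe)

theorem aderiv_subset_rho (e : RegularExpression α) (a : α) : aderiv e a ⊆ rho e := by
  induction e with
  | zero => simp [aderiv]
  | epsilon => simp [aderiv]
  | char b =>
    rintro _ ⟨-, rfl⟩
    simp [rho]
  | plus e f ihe ihf => exact Set.union_subset_union ihe ihf
  | comp e f ihe ihf =>
    exact Set.union_subset_union (Set.image_mono ihe) fun _ h => ihf h.1
  | star e ihe => exact (Set.image_mono ihe).trans Set.subset_union_left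

theorem mem_rho_of_mem_aderiv {e e' e'' : RegularExpression α} {a : α}
    (he' : e' ∈ rho e) (he'' : e'' ∈ aderiv e' a) : e'' ∈ rho e := by
  induction e generalizing e' e'' with
  | zero => exact he'.elim
  | epsilon =>
    rw [rho, Set.mem_singleton_iff] at he'
    subst he'
    exact he''.elim
  | char b =>
    rcases he' with rfl | rfl
    · obtain ⟨-, rfl⟩ := he''
      simp [rho]
    · exact he''.elim
  | plus e f ihe ihf =>
    rcases he' with he' | he'
    · exact Or.inl (ihe he' he'')
    · exact Or.inr (ihf he' he'')
  | comp e f ihe ihf =>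
    rcases he' with ⟨g, hg, rfl⟩ | he'
    · rcases he'' with ⟨g', hg', rfl⟩ | ⟨hf, -⟩
      · exact Or.inl ⟨g', ihe hg hg', rfl⟩
      · exact Or.inr (aderiv_subset_rho f a hf)
    · exact Or.inr (ihf he' he'')
  | star e ihe =>
    rcases he' with ⟨g, hg, rfl⟩ | rfl
    · rcases he'' with ⟨g', hg', rfl⟩ | ⟨⟨g', hg', rfl⟩, -⟩
      · exact Or.inl ⟨g', ihe hg hg', rfl⟩
      · exact Or.inl ⟨g', aderiv_subset_rho e a hg', rfl⟩
    · exact he''.elim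

end RegularExpression

/-- `ρ(e)` is finite, closed under Antimirov derivatives, and contains `ι(e)`. -/
theorem rho_finite_closed_contains_ini {α : Type*} (e : RegularExpression α) :
    (rho e).Finite ∧
    (∀ e' ∈ rho e, ∀ (a : α), ∀ e'' ∈ aderiv e' a, e'' ∈ rho e) ∧
    ini e ⊆ rho e :=
  ⟨RegularExpression.rho_finite e,
    fun _ he' _ _ he'' => RegularExpression.mem_rho_of_mem_aderiv he' he'',
    RegularExpression.ini_subset_rho e⟩
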